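/- arXiv:2602.04490 — 4 statements merged into one kernel-verified Lean document; each statement's English description precedes it below -/
import Mathlib

section
/- Let d = 2, let D ⊆ ℝ² be open, and suppose there is a constant C_S < ∞ such that every compactly supported smooth function v : ℝ² → ℝ with support in D satisfies ‖v‖_{L^q(D)} ≤ C_S √q · ‖∇v‖_{L²(D)} for all q ∈ [2,∞). Then for every Borel set K ⊆ D with 0 < |K| < ∞, every g ∈ L²(ℝ²) vanishing a.e. outside K, and every compactly supported smooth v with support in D, one has |∫_D g v dλ| ≤ e·C_S · |K|^{1/2} · max{2, ln(|K|^{-1})}^{1/2} · ‖g‖_{L²(K)} ‖∇v‖_{L²(D)}. -/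
open MeasureTheory Real

/-- **`H⁻¹`-type bound for functions supported in a cell, `d = 2`.**
Let `D ⊆ ℝ²` be open and suppose the two-dimensional Sobolev embedding holds with
constant `C_S √q` for all `q ∈ [2,∞)`: every compactly supported smooth `v` with support
in `D` satisfies `‖v‖_{L^q(D)} ≤ C_S √q ‖∇v‖_{L²(D)}`.  Then for every Borel `K ⊆ D`
with `0 < |K| < ∞`, every `g ∈ L²(ℝ²)` vanishing a.e. outside `K`, and every such `v`,
`|∫_D g v dλ| ≤ e C_S |K|^(1/2) max{2, ln(|K|⁻¹)}^(1/2) ‖g‖_{L²(K)} ‖∇v‖_{L²(D)}`. -/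
theorem dual_norm_bound_of_local_support_dim_two
    (D : Set (Fin 2 → ℝ)) (hD : IsOpen D) (C_S : ℝ) (hC_S : 0 ≤ C_S)
    (hSobolev : ∀ (v : (Fin 2 → ℝ) → ℝ), ContDiff ℝ (⊤ : ℕ∞) v → HasCompactSupport v →
      tsupport v ⊆ D → ∀ q : ℝ, 2 ≤ q →
        (∫ x in D, |v x| ^ q ∂volume) ^ (1 / q)
          ≤ C_S * Real.sqrt q * (∫ x in D, ‖fderiv ℝ v x‖ ^ 2 ∂volume) ^ ((1 : ℝ) / 2)) :
    ∀ (K : Set (Fin 2 → ℝ)), K ⊆ D → MeasurableSet K → 0 < volume K → volume K < ⊤ →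
    ∀ (g : (Fin 2 → ℝ) → ℝ), Measurable g → MemLp g 2 volume →
      (∀ᵐ x ∂volume, x ∉ K → g x = 0) →
    ∀ (v : (Fin 2 → ℝ) → ℝ), ContDiff ℝ (⊤ : ℕ∞) v → HasCompactSupport v → tsupport v ⊆ D →
      |∫ x in D, g x * v x ∂volume|
        ≤ Real.exp 1 * C_S * (volume K).toReal ^ ((1 : ℝ) / 2)
            * (max 2 (Real.log ((volume K).toReal⁻¹))) ^ ((1 : ℝ) / 2)
            * (∫ x in K, g x ^ 2 ∂volume) ^ ((1 : ℝ) / 2)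
            * (∫ x in D, ‖fderiv ℝ v x‖ ^ 2 ∂volume) ^ ((1 : ℝ) / 2) := by
  intro K hKD hKmeas hK0 hKfin g hgmeas hg2 hgsupp v hv hvs hvD
  set m : ℝ := (volume K).toReal with hm
  have hm0 : 0 < m := ENNReal.toReal_pos hK0.ne' hKfin.ne
  set q : ℝ := max 2 (Real.log m⁻¹) with hq
  have hq2 : (2:ℝ) ≤ q := le_max_left _ _
  have hq0 : (0:ℝ) < q := lt_of_lt_of_le two_pos hq2
  haveI : IsFiniteMeasure (volume.restrict K) :=
    ⟨by rw [Measure.restrict_apply_univ]; exact hKfin⟩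
  obtain ⟨Cv, hCv⟩ := hvs.exists_bound_of_continuous hv.continuous
  have hvcont := hv.continuous
  have habs2 : ∀ a : ℝ, |a| ^ (2:ℝ) = a ^ 2 := fun a => by
    rw [show (2:ℝ) = ((2:ℕ):ℝ) by norm_num, Real.rpow_natCast, sq_abs]
  -- notation
  set G : ℝ := (∫ x in K, g x ^ 2 ∂volume) ^ ((1:ℝ)/2) with hG
  set N : ℝ := (∫ x in D, ‖fderiv ℝ v x‖ ^ 2 ∂volume) ^ ((1:ℝ)/2) with hN
  set Iq : ℝ := ∫ x in D, |v x| ^ q ∂volume with hIq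
  have hG0 : 0 ≤ G := Real.rpow_nonneg (integral_nonneg fun x => sq_nonneg _) _
  have hN0 : 0 ≤ N := Real.rpow_nonneg (integral_nonneg fun x => sq_nonneg _) _
  -- integrability of |v|^q
  have hvq_cont : Continuous fun x => |v x| ^ q :=
    hvcont.abs.rpow_const (fun x => Or.inr hq0.le)
  have hvq_supp : HasCompactSupport fun x => |v x| ^ q := by
    have : ((fun y : ℝ => |y| ^ q) ∘ v) = fun x => |v x| ^ q := rfl
    rw [← this]
    exact hvs.comp_left (by simp [Real.zero_rpow hq0.ne'])
  have hvq_int : Integrable (fun x => |v x| ^ q) volume :=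
    hvq_cont.integrable_of_hasCompactSupport hvq_supp
  have hIqK_le : (∫ x in K, |v x| ^ q ∂volume) ≤ Iq := by
    rw [hIq]
    exact setIntegral_mono_set hvq_int.integrableOn
      (Filter.Eventually.of_forall fun x => Real.rpow_nonneg (abs_nonneg _) _)
      (HasSubset.Subset.eventuallyLE hKD)
  have hIqK0 : 0 ≤ ∫ x in K, |v x| ^ q ∂volume :=
    integral_nonneg fun x => Real.rpow_nonneg (abs_nonneg _) _
  have hIq0 : 0 ≤ Iq := le_trans hIqK0 hIqK_le
  -- step 0 : restrict the integral to K
  have hsplit : ∫ x in D, g x * v x ∂volume = ∫ x in K, g x * v x ∂volume := by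
    have h1 : (fun x => g x * v x) =ᵐ[volume] K.indicator (fun x => g x * v x) := by
      filter_upwards [hgsupp] with x hx
      by_cases hxK : x ∈ K
      · simp [Set.indicator_of_mem hxK]
      · simp [Set.indicator_of_notMem hxK, hx hxK]
    calc ∫ x in D, g x * v x ∂volume
        = ∫ x in D, K.indicator (fun x => g x * v x) x ∂volume :=
          integral_congr_ae (ae_restrict_of_ae h1)
      _ = ∫ x in D ∩ K, g x * v x ∂volume := setIntegral_indicator hKmeas
      _ = ∫ x in K, g x * v x ∂volume := by
          rw [Set.inter_eq_self_of_subset_right hKD]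
  -- step 1 : Cauchy–Schwarz on K
  have hCS : (∫ x in K, |g x| * |v x| ∂volume)
      ≤ G * (∫ x in K, v x ^ 2 ∂volume) ^ ((1:ℝ)/2) := by
    have hpq : Real.HolderConjugate 2 2 := Real.holderConjugate_iff.mpr ⟨by norm_num, by norm_num⟩
    have hgK : MemLp (fun x => |g x|) (ENNReal.ofReal 2) (volume.restrict K) := by
      have := (hg2.restrict K).abs
      rw [show ENNReal.ofReal 2 = 2 by norm_num]
      exact this
    have hvK : MemLp (fun x => |v x|) (ENNReal.ofReal 2) (volume.restrict K) :=
      MemLp.of_bound (hvcont.abs.aestronglyMeasurable) Cv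
        (Filter.Eventually.of_forall fun x => by
          simpa [Real.norm_eq_abs, abs_abs] using hCv x)
    have h := integral_mul_le_Lp_mul_Lq_of_nonneg hpq
      (Filter.Eventually.of_forall fun x => abs_nonneg (g x))
      (Filter.Eventually.of_forall fun x => abs_nonneg (v x)) hgK hvK
    calc (∫ x in K, |g x| * |v x| ∂volume)
        ≤ (∫ x in K, |g x| ^ (2:ℝ) ∂volume) ^ (1/(2:ℝ))
            * (∫ x in K, |v x| ^ (2:ℝ) ∂volume) ^ (1/(2:ℝ)) := h
      _ = G * (∫ x in K, v x ^ 2 ∂volume) ^ ((1:ℝ)/2) := by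
          simp_rw [habs2]
          rfl
  -- step 2 : interpolation ∥v∥_{L²(K)} ≤ ∥v∥_{L^q}(D) ⋅ m^{1/2-1/q}
  have hstep2 : (∫ x in K, v x ^ 2 ∂volume) ^ ((1:ℝ)/2)
      ≤ Iq ^ (1/q) * m ^ ((1:ℝ)/2 - 1/q) := by
    rcases eq_or_lt_of_le hq2 with hq2' | hq2'
    · -- q = 2
      have hvK2 : (∫ x in K, v x ^ 2 ∂volume) ≤ Iq := by
        calc (∫ x in K, v x ^ 2 ∂volume) = ∫ x in K, |v x| ^ q ∂volume := by
              simp_rw [← hq2', habs2]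
          _ ≤ Iq := hIqK_le
      have : (∫ x in K, v x ^ 2 ∂volume) ^ ((1:ℝ)/2) ≤ Iq ^ ((1:ℝ)/2) :=
        Real.rpow_le_rpow (integral_nonneg fun x => sq_nonneg _) hvK2 (by norm_num)
      calc (∫ x in K, v x ^ 2 ∂volume) ^ ((1:ℝ)/2) ≤ Iq ^ ((1:ℝ)/2) := this
        _ = Iq ^ (1/q) * m ^ ((1:ℝ)/2 - 1/q) := by
            rw [← hq2']
            norm_num
    · -- q > 2
      have hpq : Real.HolderConjugate (q/2) (q/(q-2)) := by
        rw [Real.holderConjugate_iff]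
        constructor
        · linarith
        · rw [inv_div, inv_div]
          field_simp
          ring
      have hfK : MemLp (fun x => v x ^ 2) (ENNReal.ofReal (q/2)) (volume.restrict K) :=
        MemLp.of_bound ((hvcont.pow 2).aestronglyMeasurable) (Cv ^ 2)
          (Filter.Eventually.of_forall fun x => by
            have := hCv x
            rw [Real.norm_eq_abs] at this ⊢
            rw [abs_pow]
            have h0 : (0:ℝ) ≤ |v x| := abs_nonneg _
            nlinarith [abs_nonneg (v x), norm_nonneg (v x)])
      have h1K : MemLp (fun _ : Fin 2 → ℝ => (1:ℝ)) (ENNReal.ofReal (q/(q-2)))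
          (volume.restrict K) := memLp_const 1
      have h := integral_mul_le_Lp_mul_Lq_of_nonneg hpq
        (Filter.Eventually.of_forall fun x => sq_nonneg (v x))
        (Filter.Eventually.of_forall fun _ => zero_le_one) hfK h1K
      simp only [mul_one, Real.one_rpow] at h
      have hpow : ∀ a : ℝ, (a ^ 2 : ℝ) ^ ((q/2):ℝ) = |a| ^ q := fun a => by
        rw [← sq_abs, ← Real.rpow_natCast |a| 2, ← Real.rpow_mul (abs_nonneg a)]
        norm_num
        congr 1
        ring
      rw [show (∫ x in K, (v x ^ 2) ^ ((q/2):ℝ) ∂volume) = ∫ x in K, |v x| ^ q ∂volume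
          from by simp_rw [hpow]] at h
      rw [setIntegral_const] at h
      have hmm : (∫ (_ : Fin 2 → ℝ) in K, (1:ℝ) ∂volume) = m := by simp [hm, Measure.real]
      have h2 : (∫ x in K, v x ^ 2 ∂volume)
          ≤ (∫ x in K, |v x| ^ q ∂volume) ^ (1/(q/2)) * m ^ (1/(q/(q-2))) := by
        simpa [hm, smul_eq_mul, Measure.real] using h
      have hL0 : 0 ≤ (∫ x in K, |v x| ^ q ∂volume) ^ (1/(q/2)) :=
        Real.rpow_nonneg hIqK0 _
      have h3 : (∫ x in K, v x ^ 2 ∂volume) ^ ((1:ℝ)/2)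
          ≤ ((∫ x in K, |v x| ^ q ∂volume) ^ (1/(q/2)) * m ^ (1/(q/(q-2)))) ^ ((1:ℝ)/2) :=
        Real.rpow_le_rpow (integral_nonneg fun x => sq_nonneg _) h2 (by norm_num)
      have hqne : q ≠ 0 := hq0.ne'
      have hq2ne : q - 2 ≠ 0 := by linarith
      have h4 : ((∫ x in K, |v x| ^ q ∂volume) ^ (1/(q/2)) * m ^ (1/(q/(q-2)))) ^ ((1:ℝ)/2)
          = (∫ x in K, |v x| ^ q ∂volume) ^ (1/q) * m ^ ((1:ℝ)/2 - 1/q) := by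
        rw [Real.mul_rpow hL0 (Real.rpow_nonneg hm0.le _),
          ← Real.rpow_mul hIqK0, ← Real.rpow_mul hm0.le]
        rw [show 1/(q/2) * ((1:ℝ)/2) = 1/q by rw [one_div_div]; ring,
          show 1/(q/(q-2)) * ((1:ℝ)/2) = (1:ℝ)/2 - 1/q by
            rw [one_div_div]
            field_simp]
      rw [h4] at h3
      refine h3.trans ?_
      exact mul_le_mul_of_nonneg_right
        (Real.rpow_le_rpow hIqK0 hIqK_le (by positivity))
        (Real.rpow_nonneg hm0.le _)
  -- step 3 : Sobolev
  have hsob : Iq ^ (1/q) ≤ C_S * Real.sqrt q * N := hSobolev v hv hvs hvD q hq2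
  -- step 4 : m^{1/2-1/q} ≤ m^{1/2} * e
  have hme : m ^ ((1:ℝ)/2 - 1/q) ≤ m ^ ((1:ℝ)/2) * Real.exp 1 := by
    have : m ^ ((1:ℝ)/2 - 1/q) = m ^ ((1:ℝ)/2) * m ^ (-(1/q)) := by
      rw [← Real.rpow_add hm0]
      ring_nf
    rw [this]
    refine mul_le_mul_of_nonneg_left ?_ (Real.rpow_nonneg hm0.le _)
    rw [Real.rpow_def_of_pos hm0]
    have hexp : Real.log m * -(1/q) = Real.log m⁻¹ / q := by
      rw [Real.log_inv]; ring
    rw [hexp]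
    apply Real.exp_le_exp.mpr
    rw [div_le_one hq0]
    exact le_max_right _ _
  -- combine
  have hmain : |∫ x in D, g x * v x ∂volume|
      ≤ G * ((C_S * Real.sqrt q * N) * (m ^ ((1:ℝ)/2) * Real.exp 1)) := by
    calc |∫ x in D, g x * v x ∂volume| = |∫ x in K, g x * v x ∂volume| := by rw [hsplit]
      _ ≤ ∫ x in K, |g x| * |v x| ∂volume := by
          simpa [Real.norm_eq_abs, abs_mul] using
            norm_integral_le_integral_norm (μ := volume.restrict K) (fun x => g x * v x)
      _ ≤ G * (∫ x in K, v x ^ 2 ∂volume) ^ ((1:ℝ)/2) := hCS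
      _ ≤ G * (Iq ^ (1/q) * m ^ ((1:ℝ)/2 - 1/q)) := mul_le_mul_of_nonneg_left hstep2 hG0
      _ ≤ G * ((C_S * Real.sqrt q * N) * (m ^ ((1:ℝ)/2) * Real.exp 1)) := by
          refine mul_le_mul_of_nonneg_left ?_ hG0
          exact mul_le_mul hsob hme (Real.rpow_nonneg hm0.le _)
            (by positivity)
  refine hmain.trans_eq ?_
  rw [Real.sqrt_eq_rpow]
  ring
end

section
/- Let 𝒯 be a finite collection of pairwise disjoint Borel subsets of ℝ^d, each with positive finite Lebesgue measure, let D := ∪_{K∈𝒯} K, and let f be Borel measurable with f ∈ L²(D). For each K ∈ 𝒯 let X_1^K,…,X_{N_K}^K be i.i.d. with law 𝒰(K). With Π̂_0 f := Σ_{K∈𝒯} f̂_K 1_K, where f̂_K := N_K^{-1} Σ_{i=1}^{N_K} f(X_i^K), and with f_K := |K|^{-1} ∫_K f dλ, one has 𝔼[ ‖f − Π̂_0 f‖²_{L²(D)} ] = Σ_{K∈𝒯} (1 + 1/N_K) ∫_K |f − f_K|² dλ; in particular 𝔼[‖f − Π̂_0 f‖²_{L²(D)}] ≤ Σ_{K∈𝒯}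 (1 + 1/N_K) ‖f − Π_0 f‖²_{L²(K)}. -/
/-!
On a cell `K` the empirical mean `f̂_K` is a constant, so Pythagoras in `L²(K)` gives
`∫_K |f - f̂_K|² = ∫_K |f - f_K|² + |K| |f̂_K - f_K|²`. The samples `f(X_j)` are pairwise
independent with mean `f_K` and variance `|K|⁻¹ ∫_K |f - f_K|²`, hence
`𝔼|f̂_K - f_K|² = (N_K |K|)⁻¹ ∫_K |f - f_K|²`. Summing over the disjoint cells gives the
identity, and the inequality is that identity, because `Π₀ f = f_K` on `K`.
-/

open MeasureTheory ProbabilityTheory Finset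

/-- The uniform distribution `𝒰(K)` on a Borel set `K ⊆ ℝ^d` of positive finite
Lebesgue measure: `|K|⁻¹ · λ|_K`. -/
noncomputable def uniformOn' {d : ℕ} (K : Set (Fin d → ℝ)) :
    Measure (Fin d → ℝ) :=
  (volume K)⁻¹ • volume.restrict K

open scoped ENNReal

section SquaredDeviation

variable {α : Type*} [MeasurableSpace α] {μ : Measure α} {f : α → ℝ}

theorem integral_sub_const_sq [IsFiniteMeasure μ] (hf : MemLp f 2 μ) (c : ℝ) :
    ∫ x, (f x - c) ^ 2 ∂μ
      = ∫ x, f x ^ 2 ∂μ - 2 * c * ∫ x, f x ∂μ + μ.real Set.univ * c ^ 2 := by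
  have hf1 : Integrable (fun x => 2 * c * f x) μ := (hf.integrable one_le_two).const_mul _
  have hf2 : Integrable (fun x => f x ^ 2 - 2 * c * f x) μ := hf.integrable_sq.sub hf1
  have hexpand : ∀ x, (f x - c) ^ 2 = f x ^ 2 - 2 * c * f x + c ^ 2 := fun x => by ring
  simp_rw [hexpand]
  rw [integral_add hf2 (integrable_const _), integral_sub hf.integrable_sq hf1,
    integral_const_mul, integral_const, smul_eq_mul]

theorem integral_sub_const_sq_eq_integral_sub_average_sq_add [IsFiniteMeasure μ]
    (hf : MemLp f 2 μ) (c : ℝ) :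
    ∫ x, (f x - c) ^ 2 ∂μ
      = ∫ x, (f x - ⨍ y, f y ∂μ) ^ 2 ∂μ + μ.real Set.univ * (c - ⨍ y, f y ∂μ) ^ 2 := by
  rw [integral_sub_const_sq hf, integral_sub_const_sq hf, ← measure_smul_average μ f,
    smul_eq_mul]
  ring

theorem setIntegral_sub_const_sq_eq_setIntegral_sub_setAverage_sq_add {s : Set α}
    (hs : μ s ≠ ∞) (hf : MemLp f 2 (μ.restrict s)) (c : ℝ) :
    ∫ x in s, (f x - c) ^ 2 ∂μ
      = ∫ x in s, (f x - ⨍ y in s, f y ∂μ) ^ 2 ∂μ + μ.real s * (c - ⨍ y in s, f y ∂μ) ^ 2 := by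
  have : IsFiniteMeasure (μ.restrict s) := isFiniteMeasure_restrict.2 hs
  rw [integral_sub_const_sq_eq_integral_sub_average_sq_add hf, measureReal_restrict_apply_univ]

end SquaredDeviation

section SampleMean

variable {Ω : Type*} [MeasurableSpace Ω] {P : Measure Ω} {n : ℕ} {Y : Fin n → Ω → ℝ}

theorem memLp_mean (hY : ∀ j, MemLp (Y j) 2 P) :
    MemLp (fun ω => (n : ℝ)⁻¹ * ∑ j, Y j ω) 2 P :=
  (memLp_finsetSum _ fun j _ => hY j).const_mul _

theorem variance_mean_of_pairwise_indepFun [IsFiniteMeasure P] (hY : ∀ j, MemLp (Y j) 2 P)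
    (hindep : Pairwise fun j k => Y j ⟂ᵢ[P] Y k) {v : ℝ} (hv : ∀ j, variance (Y j) P = v) :
    variance (fun ω => (n : ℝ)⁻¹ * ∑ j, Y j ω) P = (n : ℝ)⁻¹ * v := by
  have hsum : variance (fun ω => ∑ j, Y j ω) P = n * v := by
    rw [← Finset.sum_fn, IndepFun.variance_sum (fun j _ => hY j)
      fun j _ k _ hjk => hindep hjk]
    simp [hv]
  rw [variance_const_mul, hsum]
  rcases eq_or_ne (n : ℝ) 0 with hn | hn
  · simp [hn]
  · field_simp

theorem integral_mean_sub_sq_of_pairwise_indepFun [IsFiniteMeasure P] (hn : n ≠ 0)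
    (hY : ∀ j, MemLp (Y j) 2 P) (hindep : Pairwise fun j k => Y j ⟂ᵢ[P] Y k) {m v : ℝ}
    (hm : ∀ j, P[Y j] = m) (hv : ∀ j, variance (Y j) P = v) :
    ∫ ω, ((n : ℝ)⁻¹ * ∑ j, Y j ω - m) ^ 2 ∂P = (n : ℝ)⁻¹ * v := by
  have hmean : P[fun ω => (n : ℝ)⁻¹ * ∑ j, Y j ω] = m := by
    rw [integral_const_mul, integral_finsetSum _ fun j _ => (hY j).integrable one_le_two]
    simp only [hm, sum_const, card_univ, Fintype.card_fin, nsmul_eq_mul]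
    field_simp
  rw [← hmean, ← variance_eq_integral (memLp_mean hY).aemeasurable,
    variance_mean_of_pairwise_indepFun hY hindep hv]

end SampleMean

section UniformSampling

variable {d : ℕ} {Ω : Type*} [MeasurableSpace Ω] {P : Measure Ω} {K : Set (Fin d → ℝ)}
  {f : (Fin d → ℝ) → ℝ}

theorem integral_uniformOn' (g : (Fin d → ℝ) → ℝ) :
    ∫ x, g x ∂uniformOn' K = ⨍ x in K, g x := by
  rw [uniformOn', setAverage_eq']

theorem memLp_uniformOn' {p : ℝ≥0∞} (hf : MemLp f p (volume.restrict K)) (hK : volume K ≠ 0) :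
    MemLp f p (uniformOn' K) :=
  hf.smul_measure (ENNReal.inv_ne_top.2 hK)

variable {Z : Ω → Fin d → ℝ}

theorem memLp_comp_of_map_eq_uniformOn' {p : ℝ≥0∞} (hZ : Measurable Z)
    (hlaw : P.map Z = uniformOn' K) (hf : MemLp f p (uniformOn' K)) :
    MemLp (fun ω => f (Z ω)) p P :=
  (hlaw ▸ hf).comp_of_map hZ.aemeasurable

theorem integral_comp_of_map_eq_uniformOn' (hZ : Measurable Z) (hlaw : P.map Z = uniformOn' K)
    {g : (Fin d → ℝ) → ℝ} (hg : Measurable g) :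
    ∫ ω, g (Z ω) ∂P = ⨍ x in K, g x := by
  rw [← integral_map hZ.aemeasurable hg.aestronglyMeasurable, hlaw, integral_uniformOn']

variable {n : ℕ} {X : Fin n → Ω → Fin d → ℝ}

theorem integral_mean_comp_sub_setAverage_sq [IsFiniteMeasure P] (hn : n ≠ 0)
    (hX : ∀ j, Measurable (X j)) (hlaw : ∀ j, P.map (X j) = uniformOn' K)
    (hindep : Pairwise fun j k => X j ⟂ᵢ[P] X k)
    (hf : Measurable f) (hf2 : MemLp f 2 (uniformOn' K)) :
    ∫ ω, ((n : ℝ)⁻¹ * ∑ j, f (X j ω) - ⨍ x in K, f x) ^ 2 ∂P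
      = (n : ℝ)⁻¹ * ⨍ x in K, (f x - ⨍ y in K, f y) ^ 2 := by
  have hY j : MemLp (fun ω => f (X j ω)) 2 P :=
    memLp_comp_of_map_eq_uniformOn' (hX j) (hlaw j) hf2
  have hm j : P[fun ω => f (X j ω)] = ⨍ x in K, f x :=
    integral_comp_of_map_eq_uniformOn' (hX j) (hlaw j) hf
  refine integral_mean_sub_sq_of_pairwise_indepFun hn hY
    (fun j k hjk => (hindep hjk).comp hf hf) hm fun j => ?_
  rw [variance_eq_integral (hY j).aemeasurable, hm j]
  exact integral_comp_of_map_eq_uniformOn' (hX j) (hlaw j) ((hf.sub_const _).pow_const 2)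

theorem integrable_setIntegral_sub_mean_comp_sq [IsFiniteMeasure P] (hKtop : volume K ≠ ∞)
    (hX : ∀ j, Measurable (X j)) (hlaw : ∀ j, P.map (X j) = uniformOn' K)
    (hfK : MemLp f 2 (volume.restrict K)) (hf2 : MemLp f 2 (uniformOn' K)) :
    Integrable (fun ω => ∫ x in K, (f x - (n : ℝ)⁻¹ * ∑ j, f (X j ω)) ^ 2) P := by
  have hmean := memLp_mean fun j => memLp_comp_of_map_eq_uniformOn' (hX j) (hlaw j) hf2
  rw [funext fun ω => setIntegral_sub_const_sq_eq_setIntegral_sub_setAverage_sq_add hKtop hfK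
    ((n : ℝ)⁻¹ * ∑ j, f (X j ω))]
  exact (integrable_const _).add ((hmean.sub (memLp_const _)).integrable_sq.const_mul _)

theorem integral_setIntegral_sub_mean_comp_sq [IsProbabilityMeasure P] (hK0 : volume K ≠ 0)
    (hKtop : volume K ≠ ∞) (hn : n ≠ 0)
    (hX : ∀ j, Measurable (X j)) (hlaw : ∀ j, P.map (X j) = uniformOn' K)
    (hindep : Pairwise fun j k => X j ⟂ᵢ[P] X k)
    (hf : Measurable f) (hfK : MemLp f 2 (volume.restrict K)) :
    ∫ ω, (∫ x in K, (f x - (n : ℝ)⁻¹ * ∑ j, f (X j ω)) ^ 2) ∂P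
      = (1 + 1 / (n : ℝ)) * ∫ x in K, (f x - ⨍ y in K, f y) ^ 2 := by
  have hf2 := memLp_uniformOn' hfK hK0
  have hmean := memLp_mean fun j => memLp_comp_of_map_eq_uniformOn' (hX j) (hlaw j) hf2
  have hsq : Integrable (fun ω => ((n : ℝ)⁻¹ * ∑ j, f (X j ω) - ⨍ y in K, f y) ^ 2) P :=
    (hmean.sub (memLp_const _)).integrable_sq
  have hV : volume.real K ≠ 0 := (ENNReal.toReal_pos hK0 hKtop).ne'
  rw [funext fun ω => setIntegral_sub_const_sq_eq_setIntegral_sub_setAverage_sq_add hKtop hfK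
    ((n : ℝ)⁻¹ * ∑ j, f (X j ω)), integral_add (integrable_const _) (hsq.const_mul _),
    integral_const, integral_const_mul,
    integral_mean_comp_sub_setAverage_sq hn hX hlaw hindep hf hf2,
    setAverage_eq (μ := volume) (fun x => (f x - ⨍ y in K, f y) ^ 2)]
  simp only [probReal_univ, smul_eq_mul]
  field_simp

end UniformSampling

theorem sum_indicator_apply_of_mem {α ι β : Type*} [Fintype ι] [AddCommMonoid β]
    {K : ι → Set α} (hdisj : Pairwise (Function.onFun Disjoint K)) {i : ι} {x : α}
    (hx : x ∈ K i) (g : ι → α → β) :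
    ∑ j, (K j).indicator (g j) x = g i x := by
  rw [Finset.sum_eq_single_of_mem i (mem_univ i) fun j _ hji =>
    Set.indicator_of_notMem (Set.disjoint_left.mp (hdisj hji.symm) hx) _]
  exact Set.indicator_of_mem hx _

theorem setIntegral_iUnion_sub_sum_indicator_sq {α ι : Type*} [MeasurableSpace α]
    {μ : Measure α} [Fintype ι] {K : ι → Set α} (hK : ∀ i, MeasurableSet (K i))
    (hKtop : ∀ i, μ (K i) ≠ ∞) (hdisj : Pairwise (Function.onFun Disjoint K)) {f : α → ℝ}
    (hf : MemLp f 2 (μ.restrict (⋃ i, K i))) (c : ι → ℝ) :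
    ∫ x in ⋃ i, K i, (f x - ∑ i, (K i).indicator (fun _ => c i) x) ^ 2 ∂μ
      = ∑ i, ∫ x in K i, (f x - c i) ^ 2 ∂μ := by
  have hpiecewise :
      MemLp (fun x => ∑ i, (K i).indicator (fun _ => c i) x) 2 (μ.restrict (⋃ i, K i)) :=
    memLp_finsetSum _ fun i _ => memLp_indicator_const 2 (hK i) _
      (Or.inr ((Measure.restrict_apply_le _ _).trans_lt (hKtop i).lt_top).ne)
  have hint : IntegrableOn (fun x => (f x - ∑ i, (K i).indicator (fun _ => c i) x) ^ 2)
      (⋃ i, K i) μ := (hf.sub hpiecewise).integrable_sq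
  rw [integral_iUnion_fintype hK hdisj fun i => hint.mono_set (Set.subset_iUnion K i)]
  refine sum_congr rfl fun i _ => setIntegral_congr_fun (hK i) fun x hx => ?_
  rw [sum_indicator_apply_of_mem hdisj hx]

/-- **Expected `L²(D)` error of the randomized piecewise constant projection `Π̂₀`.**
Let `𝒯 = (K i)_{i : ι}` be a finite collection of pairwise disjoint Borel subsets of
`ℝ^d` of positive finite measure with union `D`, `f ∈ L²(D)` Borel, and for each cell
`X^i_1, …, X^i_{N i}` i.i.d. `∼ 𝒰(K i)`.  With
`Π̂₀ f := ∑ i f̂_i 1_{K i}`, `f̂_i := (N i)⁻¹ ∑ j f (X^i_j)` and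
`f_i := |K i|⁻¹ ∫_{K i} f dλ` one has
`𝔼[‖f − Π̂₀ f‖²_{L²(D)}] = ∑ i (1 + 1/N i) ∫_{K i} |f − f_i|² dλ`, in particular the
left-hand side is `≤ ∑ i (1 + 1/N i) ‖f − Π₀ f‖²_{L²(K i)}`. -/
theorem randomized_piecewise_constant_L2_error
    {d : ℕ} {Ω : Type*} [MeasurableSpace Ω] {P : Measure Ω} [IsProbabilityMeasure P]
    {ι : Type*} [Fintype ι]
    (K : ι → Set (Fin d → ℝ)) (hK : ∀ i, MeasurableSet (K i))
    (hK0 : ∀ i, 0 < volume (K i)) (hKtop : ∀ i, volume (K i) < ⊤)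
    (hdisj : Pairwise (Function.onFun Disjoint K))
    (f : (Fin d → ℝ) → ℝ) (hf : Measurable f)
    (hfL2 : MemLp f 2 (volume.restrict (⋃ i, K i)))
    (N : ι → ℕ) (hN : ∀ i, 0 < N i)
    (X : (i : ι) → Fin (N i) → Ω → (Fin d → ℝ))
    (hXm : ∀ i j, Measurable (X i j))
    (hXlaw : ∀ i j, Measure.map (X i j) P = uniformOn' (K i))
    (hXindep : iIndepFun
      (fun (p : Σ i : ι, Fin (N i)) => X p.1 p.2) P)
    -- the randomized projection `Π̂₀ f` and the orthogonal projection `Π₀ f`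
    (Phat : Ω → (Fin d → ℝ) → ℝ)
    (hPhat : ∀ ω x, Phat ω x
      = ∑ i : ι, Set.indicator (K i)
          (fun _ => (N i : ℝ)⁻¹ * ∑ j : Fin (N i), f (X i j ω)) x)
    (P0f : (Fin d → ℝ) → ℝ)
    (hP0f : ∀ x, P0f x
      = ∑ i : ι, Set.indicator (K i)
          (fun _ => (volume (K i)).toReal⁻¹ * ∫ y in K i, f y ∂volume) x) :
    (∫ ω, (∫ x in ⋃ i, K i, (f x - Phat ω x) ^ 2 ∂volume) ∂P
        = ∑ i : ι, (1 + 1 / (N i : ℝ))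
            * ∫ x in K i,
                (f x - (volume (K i)).toReal⁻¹ * ∫ y in K i, f y ∂volume) ^ 2 ∂volume)
    ∧ (∫ ω, (∫ x in ⋃ i, K i, (f x - Phat ω x) ^ 2 ∂volume) ∂P
        ≤ ∑ i : ι, (1 + 1 / (N i : ℝ))
            * ∫ x in K i, (f x - P0f x) ^ 2 ∂volume) := by
  have hfK i : MemLp f 2 (volume.restrict (K i)) :=
    hfL2.mono_measure (Measure.restrict_mono (Set.subset_iUnion K i) le_rfl)
  have hindep i : Pairwise fun j k => X i j ⟂ᵢ[P] X i k := fun j k hjk =>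
    hXindep.indepFun (i := ⟨i, j⟩) (j := ⟨i, k⟩) (by simpa using hjk)
  have hsplit ω : ∫ x in ⋃ i, K i, (f x - Phat ω x) ^ 2
      = ∑ i, ∫ x in K i, (f x - (N i : ℝ)⁻¹ * ∑ j, f (X i j ω)) ^ 2 := by
    simp only [hPhat]
    exact setIntegral_iUnion_sub_sum_indicator_sq hK (fun i => (hKtop i).ne) hdisj hfL2 _
  have herror : ∫ ω, (∫ x in ⋃ i, K i, (f x - Phat ω x) ^ 2) ∂P
      = ∑ i, (1 + 1 / (N i : ℝ)) * ∫ x in K i, (f x - ⨍ y in K i, f y) ^ 2 := by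
    simp_rw [hsplit]
    rw [integral_finsetSum _ fun i _ => integrable_setIntegral_sub_mean_comp_sq (hKtop i).ne
      (hXm i) (hXlaw i) (hfK i) (memLp_uniformOn' (hfK i) (hK0 i).ne')]
    exact sum_congr rfl fun i _ => integral_setIntegral_sub_mean_comp_sq (hK0 i).ne'
      (hKtop i).ne (hN i).ne' (hXm i) (hXlaw i) (hindep i) hf (hfK i)
  simp only [setAverage_eq, smul_eq_mul, measureReal_def] at herror
  refine ⟨herror, herror.le.trans_eq (sum_congr rfl fun i _ => ?_)⟩
  congr 1
  exact setIntegral_congr_fun (hK i) fun x hx => by rw [hP0f, sum_indicator_apply_of_mem hdisj hx]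
end

section
/- Let Y_1, Y_2 be i.i.d. random variables uniformly distributed on (0,1). Then almost surely Y_1 ≠ Y_2, and on this event the unique affine function p(x) = ax + b satisfying p(Y_i) = Y_i² for i = 1,2 (equivalently, the unique minimizer over affine functions q of Σ_{i=1}^2 |Y_i² − q(Y_i)|²) is p(x) = (Y_1 + Y_2)x − Y_1 Y_2. Moreover 𝔼[ ∫_0^1 p(x) dx ] = 1/4, whereas ∫_0^1 x² dx = 1/3; hence the discrete least-squares polynomial fit of f(x) = x² from two uniform samples is biased: the expectation of its integral differs from the integral of f. -/
/-!
The two-point interpolant of `x ↦ x²` at `Y₁ ≠ Y₂` is the secant `(Y₁ + Y₂) x - Y₁ Y₂`, whose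
integral over `[0, 1]` is `(Y₁ + Y₂) / 2 - Y₁ Y₂`. By independence its expectation is
`𝔼Y - (𝔼Y)² = 1/4`, while `∫₀¹ x² = 𝔼[Y²] = 1/3`: the bias is exactly `Var Y = 1/12`.
Almost sure distinctness holds because the diagonal is null for the product of two atomless laws.
-/

open MeasureTheory ProbabilityTheory intervalIntegral

theorem ProbabilityTheory.IndepFun.ae_ne {Ω α : Type*} [MeasurableSpace Ω]
    {P : Measure Ω} [IsFiniteMeasure P] [MeasurableSpace α] [MeasurableEq α]
    {X Y : Ω → α} (hX : Measurable X) (hY : Measurable Y) (hXY : X ⟂ᵢ[P] Y)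
    [NullSingletonClass (P.map Y)] : ∀ᵐ ω ∂P, X ω ≠ Y ω := by
  have hdiag : MeasurableSet {p : α × α | p.1 = p.2} := measurableSet_diagonal
  refine ae_iff.mpr ?_
  simp only [ne_eq, not_not]
  calc P {ω | X ω = Y ω} = P.map (fun ω ↦ (X ω, Y ω)) {p | p.1 = p.2} :=
        (Measure.map_apply (hX.prodMk hY) hdiag).symm
    _ = ((P.map X).prod (P.map Y)) {p | p.1 = p.2} := by
        rw [hXY.map_prod_eq_prod_map_map hX.aemeasurable hY.aemeasurable]
    _ = 0 := by simp [Measure.prod_apply hdiag, Set.preimage, measure_singleton]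

theorem integral_unitInterval_mul_sub (s c : ℝ) :
    ∫ x in (0 : ℝ)..1, (s * x - c) = s / 2 - c := by
  rw [intervalIntegral.integral_sub (intervalIntegrable_id.const_mul s) intervalIntegrable_const,
    intervalIntegral.integral_const_mul]
  simp [div_eq_mul_inv]

theorem affine_interpolant_sq_iff {K : Type*} [Field K] {x y : K} (hxy : x ≠ y) (a b : K) :
    (a * x + b = x ^ 2 ∧ a * y + b = y ^ 2) ↔ (a = x + y ∧ b = -(x * y)) := by
  constructor
  · rintro ⟨hx, hy⟩
    have ha : a = x + y := by
      apply mul_right_cancel₀ (sub_ne_zero.mpr hxy)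
      linear_combination hx - hy
    exact ⟨ha, by linear_combination hx - x * ha⟩
  · rintro ⟨rfl, rfl⟩
    constructor <;> ring

theorem integrable_of_map_eq_restrict_Ioo {Ω : Type*} [MeasurableSpace Ω] {P : Measure Ω}
    {Y : Ω → ℝ} (hY : AEMeasurable Y P) {a b : ℝ}
    (hlaw : P.map Y = volume.restrict (Set.Ioo a b)) : Integrable Y P := by
  have : Integrable id (P.map Y) := by
    rw [hlaw]
    exact continuous_id.integrableOn_Icc.mono_set Set.Ioo_subset_Icc_self
  exact (integrable_map_measure this.aestronglyMeasurable hY).mp this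

theorem integral_eq_of_map_eq_restrict_Ioo {Ω : Type*} [MeasurableSpace Ω] {P : Measure Ω}
    {Y : Ω → ℝ} (hY : AEMeasurable Y P) {a b : ℝ} (hab : a ≤ b)
    (hlaw : P.map Y = volume.restrict (Set.Ioo a b)) : ∫ ω, Y ω ∂P = (b ^ 2 - a ^ 2) / 2 := by
  rw [← integral_map (f := fun y ↦ y) hY aestronglyMeasurable_id, hlaw,
    ← integral_Ioc_eq_integral_Ioo, ← intervalIntegral.integral_of_le hab, integral_id]

theorem integral_integral_secant_of_indepFun {Ω : Type*} [MeasurableSpace Ω] {P : Measure Ω}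
    {Y₁ Y₂ : Ω → ℝ} (h₁ : Integrable Y₁ P) (h₂ : Integrable Y₂ P) (hindep : Y₁ ⟂ᵢ[P] Y₂) :
    ∫ ω, (∫ x in (0 : ℝ)..1, ((Y₁ ω + Y₂ ω) * x - Y₁ ω * Y₂ ω)) ∂P
      = (P[Y₁] + P[Y₂]) / 2 - P[Y₁] * P[Y₂] := by
  simp_rw [integral_unitInterval_mul_sub]
  have hsum : Integrable (fun ω ↦ (Y₁ ω + Y₂ ω) / 2) P := (h₁.add h₂).div_const 2
  have hprod : Integrable (fun ω ↦ Y₁ ω * Y₂ ω) P := hindep.integrable_mul h₁ h₂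
  rw [integral_sub hsum hprod, MeasureTheory.integral_div, integral_add h₁ h₂,
    ← hindep.integral_fun_mul_eq_mul_integral h₁.aestronglyMeasurable h₂.aestronglyMeasurable]

/-- **Bias of the discrete least-squares fit (counterexample).**
Let `Y₁, Y₂` be i.i.d. uniform on `(0,1)`.  Almost surely `Y₁ ≠ Y₂`, and then the unique
affine function `p(x) = ax + b` interpolating the data `p(Y_i) = Y_i²` is
`p(x) = (Y₁+Y₂)x − Y₁Y₂`.  Moreover `𝔼[∫₀¹ p] = 1/4 ≠ 1/3 = ∫₀¹ x² dx`, so the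
randomized least-squares fit of `f(x) = x²` from two uniform samples is biased. -/
theorem least_squares_fit_biased_counterexample
    {Ω : Type*} [MeasurableSpace Ω] {P : Measure Ω} [IsProbabilityMeasure P]
    (Y₁ Y₂ : Ω → ℝ) (hY₁ : Measurable Y₁) (hY₂ : Measurable Y₂)
    (hlaw₁ : Measure.map Y₁ P = volume.restrict (Set.Ioo (0 : ℝ) 1))
    (hlaw₂ : Measure.map Y₂ P = volume.restrict (Set.Ioo (0 : ℝ) 1))
    (hindep : IndepFun Y₁ Y₂ P) :
    (∀ᵐ ω ∂P, Y₁ ω ≠ Y₂ ω)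
    ∧ (∀ᵐ ω ∂P, ∀ a b : ℝ,
        ((a * Y₁ ω + b = (Y₁ ω) ^ 2 ∧ a * Y₂ ω + b = (Y₂ ω) ^ 2)
          ↔ (a = Y₁ ω + Y₂ ω ∧ b = -(Y₁ ω * Y₂ ω))))
    ∧ (∫ ω, (∫ x in (0 : ℝ)..1, ((Y₁ ω + Y₂ ω) * x - Y₁ ω * Y₂ ω)) ∂P = 1 / 4)
    ∧ (∫ x in (0 : ℝ)..1, x ^ 2 = 1 / 3)
    ∧ (1 / 4 : ℝ) ≠ 1 / 3 := by
  have hint₁ := integrable_of_map_eq_restrict_Ioo hY₁.aemeasurable hlaw₁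
  have hint₂ := integrable_of_map_eq_restrict_Ioo hY₂.aemeasurable hlaw₂
  have hmean₁ := integral_eq_of_map_eq_restrict_Ioo hY₁.aemeasurable zero_le_one hlaw₁
  have hmean₂ := integral_eq_of_map_eq_restrict_Ioo hY₂.aemeasurable zero_le_one hlaw₂
  have : NullSingletonClass (P.map Y₂) := hlaw₂ ▸ inferInstance
  have hne := hindep.ae_ne hY₁ hY₂
  refine ⟨hne, hne.mono fun ω h ↦ affine_interpolant_sq_iff h, ?_, ?_, by norm_num⟩
  · rw [integral_integral_secant_of_indepFun hint₁ hint₂ hindep, hmean₁, hmean₂]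
    norm_num
  · norm_num [integral_pow]
end

section
/- Let N ≥ 1, let Z_1,…,Z_N be i.i.d. nonnegative real random variables, let ε > 0, and set q := ℙ(Z_1 ≤ 2ε). If q ≤ 1/8, then ℙ( N^{-1} Σ_{i=1}^N Z_i ≤ ε ) ≤ (8q)^{N/2}. -/
open MeasureTheory ProbabilityTheory Finset

open scoped ENNReal

/-!
If the average of `N` nonnegative numbers is at most `ε`, Markov's inequality leaves at least
`⌈N/2⌉` of them at most `2ε`. By independence, a fixed set of `⌈N/2⌉` indices has all `Z_i ≤ 2ε`
with probability `q ^ ⌈N/2⌉`, and there are `C(N, ⌈N/2⌉) ≤ 2 ^ N ≤ 4 ^ ⌈N/2⌉` such sets, so the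
probability is at most `(4q) ^ ⌈N/2⌉ ≤ (4q) ^ (N/2)`, using `4q ≤ 1`.
-/

lemma Fintype.card_le_two_mul_card_filter_le_of_sum_le {ι : Type*} [Fintype ι] {x : ι → ℝ}
    (hx : ∀ i, 0 ≤ x i) {ε : ℝ} (hε : 0 < ε) (hsum : ∑ i, x i ≤ Fintype.card ι * ε) :
    Fintype.card ι ≤ 2 * #{i | x i ≤ 2 * ε} := by
  have hmarkov : #{i | ¬x i ≤ 2 * ε} * (2 * ε) ≤ Fintype.card ι * ε :=
    calc #{i | ¬x i ≤ 2 * ε} * (2 * ε) ≤ ∑ i ∈ {i | ¬x i ≤ 2 * ε}, x i := by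
          rw [← nsmul_eq_mul]
          exact card_nsmul_le_sum _ _ _ fun i hi => (not_le.1 (mem_filter.1 hi).2).le
      _ ≤ ∑ i, x i := sum_le_sum_of_subset_of_nonneg (subset_univ _) fun i _ _ => hx i
      _ ≤ Fintype.card ι * ε := hsum
  have hlarge : 2 * #{i | ¬x i ≤ 2 * ε} ≤ Fintype.card ι := by
    have : ((2 * #{i | ¬x i ≤ 2 * ε} : ℕ) : ℝ) ≤ Fintype.card ι :=
      le_of_mul_le_mul_right (by push_cast; linarith) hε
    exact_mod_cast this
  have hsplit := card_filter_add_card_filter_not (s := univ) (fun i => x i ≤ 2 * ε)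
  rw [card_univ] at hsplit
  omega

namespace ProbabilityTheory

lemma iIndepFun.iIndepSet_preimage {Ω ι : Type*} [MeasurableSpace Ω] {μ : Measure Ω}
    {β : ι → Type*} [∀ i, MeasurableSpace (β i)] {X : ∀ i, Ω → β i} (hX : iIndepFun X μ)
    (hXm : ∀ i, Measurable (X i)) {A : ∀ i, Set (β i)} (hA : ∀ i, MeasurableSet (A i)) :
    iIndepSet (fun i => X i ⁻¹' A i) μ :=
  (iIndepSet_iff_meas_biInter fun i => hXm i (hA i)).2 fun S =>
    hX.measure_inter_preimage_eq_mul S fun i _ => hA i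

open Classical in
lemma iIndepSet.measure_le_card_filter_mem_le {Ω ι : Type*} [MeasurableSpace Ω] {μ : Measure Ω}
    [Fintype ι] {E : ι → Set Ω} (hE : iIndepSet E μ) {p : ℝ≥0∞} (hp : ∀ i, μ (E i) ≤ p)
    (m : ℕ) : μ {ω | m ≤ #{i | ω ∈ E i}} ≤ (Fintype.card ι).choose m * p ^ m := by
  have hcover : {ω | m ≤ #{i | ω ∈ E i}} ⊆ ⋃ S ∈ powersetCard m univ, ⋂ i ∈ S, E i := by
    intro ω hω
    obtain ⟨S, hS, hcard⟩ := exists_subset_card_eq hω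
    simp only [Set.mem_iUnion, Set.mem_iInter, mem_powersetCard]
    exact ⟨S, ⟨subset_univ S, hcard⟩, fun i hi => (mem_filter.1 (hS hi)).2⟩
  calc μ {ω | m ≤ #{i | ω ∈ E i}}
      ≤ ∑ S ∈ powersetCard m univ, μ (⋂ i ∈ S, E i) :=
        (measure_mono hcover).trans (measure_biUnion_finset_le _ _)
    _ ≤ ∑ S ∈ powersetCard m (univ : Finset ι), p ^ m := by
        refine sum_le_sum fun S hS => ?_
        rw [hE.meas_biInter, ← (mem_powersetCard.1 hS).2]
        exact prod_le_pow_card _ _ _ fun i _ => hp i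
    _ = (Fintype.card ι).choose m * p ^ m := by
        rw [sum_const, card_powersetCard, card_univ, nsmul_eq_mul]

end ProbabilityTheory

lemma choose_mul_pow_le_rpow {q : ℝ} (hq : 0 ≤ q) (hq4 : 4 * q ≤ 1) (n : ℕ) :
    n.choose ((n + 1) / 2) * q ^ ((n + 1) / 2) ≤ (4 * q) ^ ((n : ℝ) / 2) := by
  set m := (n + 1) / 2
  have hchoose : (n.choose m : ℝ) ≤ 4 ^ m := by
    have : 2 ^ n ≤ 4 ^ m := by
      rw [show 4 = 2 ^ 2 by rfl, ← pow_mul]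
      exact Nat.pow_le_pow_right two_pos (by omega)
    exact_mod_cast (Nat.choose_le_two_pow n m).trans this
  have hexp : (n : ℝ) / 2 ≤ m := by
    rw [div_le_iff₀ two_pos]
    exact_mod_cast (by omega : n ≤ m * 2)
  calc n.choose m * q ^ m ≤ 4 ^ m * q ^ m := by gcongr
    _ = (4 * q) ^ (m : ℝ) := by rw [Real.rpow_natCast, mul_pow]
    _ ≤ (4 * q) ^ ((n : ℝ) / 2) :=
        Real.rpow_le_rpow_of_exponent_ge' (by positivity) hq4 (by positivity) hexp

/-- **Small-ball estimate for averages of i.i.d. nonnegative random variables.**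
Let `Z_1, …, Z_N` be i.i.d. nonnegative real random variables, `ε > 0`, and
`q := ℙ(Z_1 ≤ 2ε)`.  If `q ≤ 1/8`, then `ℙ(N⁻¹ ∑ Z_i ≤ ε) ≤ (8q)^{N/2}`. -/
theorem small_ball_estimate_iid_average
    {Ω : Type*} [MeasurableSpace Ω] {P : Measure Ω} [IsProbabilityMeasure P]
    (N : ℕ) (hN : 0 < N)
    (Z : Fin N → Ω → ℝ) (hZm : ∀ i, Measurable (Z i))
    (hZnonneg : ∀ i ω, 0 ≤ Z i ω)
    (hZindep : iIndepFun Z P)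
    (hZident : ∀ i, Measure.map (Z i) P = Measure.map (Z ⟨0, hN⟩) P)
    (ε : ℝ) (hε : 0 < ε)
    (q : ℝ) (hq : q = (P {ω | Z ⟨0, hN⟩ ω ≤ 2 * ε}).toReal)
    (hq8 : q ≤ 1 / 8) :
    (P {ω | (N : ℝ)⁻¹ * ∑ i : Fin N, Z i ω ≤ ε}).toReal
      ≤ (8 * q) ^ ((N : ℝ) / 2) := by
  classical
  have hsmall : ∀ i, P (Z i ⁻¹' Set.Iic (2 * ε)) = P {ω | Z ⟨0, hN⟩ ω ≤ 2 * ε} := fun i => by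
    rw [← Measure.map_apply (hZm i) measurableSet_Iic, hZident i,
      Measure.map_apply (hZm _) measurableSet_Iic]
    rfl
  have hevent : {ω | (N : ℝ)⁻¹ * ∑ i : Fin N, Z i ω ≤ ε} ⊆
      {ω | (N + 1) / 2 ≤ #{i | ω ∈ Z i ⁻¹' Set.Iic (2 * ε)}} := fun ω hω => by
    have hsum : ∑ i, Z i ω ≤ Fintype.card (Fin N) * ε := by
      rw [Fintype.card_fin, ← inv_mul_le_iff₀ (by positivity)]
      exact hω
    have := Fintype.card_le_two_mul_card_filter_le_of_sum_le (fun i => hZnonneg i ω) hε hsum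
    simp only [Fintype.card_fin] at this
    simp only [Set.mem_ofPred_eq, Set.mem_preimage, Set.mem_Iic]
    omega
  have hbound := (measure_mono hevent).trans <|
    (hZindep.iIndepSet_preimage hZm fun _ => measurableSet_Iic).measure_le_card_filter_mem_le
      (fun i => (hsmall i).le) ((N + 1) / 2)
  have hq0 : 0 ≤ q := hq ▸ ENNReal.toReal_nonneg
  calc (P {ω | (N : ℝ)⁻¹ * ∑ i : Fin N, Z i ω ≤ ε}).toReal
      ≤ N.choose ((N + 1) / 2) * q ^ ((N + 1) / 2) := by
        simpa [hq] using ENNReal.toReal_mono (by finiteness) hbound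
    _ ≤ (4 * q) ^ ((N : ℝ) / 2) := choose_mul_pow_le_rpow hq0 (by linarith) N
    _ ≤ (8 * q) ^ ((N : ℝ) / 2) := Real.rpow_le_rpow (by positivity) (by linarith) (by positivity)
end
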